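/- Under the dual error setting with coercivity constant α_A, for each n ∈ {0, …, N−1} one has (εⁿ)ᵀ M εⁿ + Δt·∑_{m=n}^{N−1} (εᵐ)ᵀ Aᵀ εᵐ ≤ (Δt/α_A)·∑_{m=n}^{N−1} ‖ϱᵐ‖₋₁². -/

import Mathlib

/-!
Test the scheme with `εᵐ` itself: `(εᵐ)ᵀ M εᵐ + Δt (εᵐ)ᵀ Aᵀ εᵐ = (εᵐ)ᵀ M εᵐ⁺¹ − Δt (ϱᵐ)ᵀ εᵐ`.
The mixed `M`-term is at most half the sum of the two `M`-energies, and the load term is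
at most `‖ϱᵐ‖₋₁ ‖εᵐ‖_{G*} ≤ ‖ϱᵐ‖₋₁² / (2 α_A) + (α_A / 2) ‖εᵐ‖²_{G*}`, whose last part is
absorbed by coercivity. This yields a one-step energy inequality, and summing it from `n`
to `N − 1` telescopes the `M`-energies down to `(εᴺ)ᵀ M εᴺ = 0`.
-/

open Matrix BigOperators Finset

/-- The energy norm `‖v‖_{G*} = √(vᵀ G* v)` induced by a matrix `G`. -/
noncomputable def normG {d : ℕ} (G : Matrix (Fin d) (Fin d) ℝ) (v : Fin d → ℝ) : ℝ :=
  Real.sqrt (v ⬝ᵥ G.mulVec v)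

/-- The dual norm `‖r‖₋₁ = sup_{v ≠ 0} (rᵀ v)/‖v‖_{G*}`. -/
noncomputable def dualNorm {d : ℕ} (G : Matrix (Fin d) (Fin d) ℝ) (r : Fin d → ℝ) : ℝ :=
  ⨆ v : {v : Fin d → ℝ // v ≠ 0}, (r ⬝ᵥ (v : Fin d → ℝ)) / normG G (v : Fin d → ℝ)

/-- The symmetric part `(A + Aᵀ)/2` of a matrix. -/
noncomputable def symPart {d : ℕ} (A : Matrix (Fin d) (Fin d) ℝ) : Matrix (Fin d) (Fin d) ℝ :=
  ((1 : ℝ)/2) • (A + Aᵀ)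

section Telescoping

variable {β : Type*} [AddCommGroup β] [PartialOrder β] [IsOrderedAddMonoid β]

theorem add_sum_Ico_le_of_le_succ {a b c : ℕ → β} {n N : ℕ} (hnN : n ≤ N)
    (h : ∀ k ∈ Ico n N, a k + b k ≤ a (k + 1) + c k) :
    a n + ∑ k ∈ Ico n N, b k ≤ a N + ∑ k ∈ Ico n N, c k := by
  have hsum := sum_le_sum h
  rw [sum_add_distrib, sum_add_distrib] at hsum
  have htele : ∑ k ∈ Ico n N, a (k + 1) = a N - a n + ∑ k ∈ Ico n N, a k := by
    rw [← sum_Ico_sub a hnN, sum_sub_distrib, sub_add_cancel]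
  calc a n + ∑ k ∈ Ico n N, b k
      = a n - ∑ k ∈ Ico n N, a k + (∑ k ∈ Ico n N, a k + ∑ k ∈ Ico n N, b k) := by abel
    _ ≤ a n - ∑ k ∈ Ico n N, a k + (∑ k ∈ Ico n N, a (k + 1) + ∑ k ∈ Ico n N, c k) := by
      gcongr
    _ = a N + ∑ k ∈ Ico n N, c k := by rw [htele]; abel

end Telescoping

section QuadraticForm

variable {ι : Type*} [Fintype ι] {S : Matrix ι ι ℝ}

theorem Matrix.PosSemidef.dotProduct_mulVec_sq_le (hS : S.PosSemidef) (a b : ι → ℝ) :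
    (a ⬝ᵥ S *ᵥ b) ^ 2 ≤ (a ⬝ᵥ S *ᵥ a) * (b ⬝ᵥ S *ᵥ b) := by
  let _ := S.toSeminormedAddCommGroup hS
  let _ := S.toInnerProductSpace hS
  have hinner : ∀ x y : ι → ℝ, inner ℝ x y = x ⬝ᵥ S *ᵥ y := fun x y => by
    rw [dotProduct_comm]; rfl
  simpa only [hinner, sq] using real_inner_mul_inner_self_le a b

theorem Matrix.PosSemidef.two_mul_dotProduct_mulVec_le (hS : S.PosSemidef) (a b : ι → ℝ) :
    2 * (a ⬝ᵥ S *ᵥ b) ≤ a ⬝ᵥ S *ᵥ a + b ⬝ᵥ S *ᵥ b := by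
  have ha : 0 ≤ a ⬝ᵥ S *ᵥ a := by simpa using hS.dotProduct_mulVec_nonneg a
  have hb : 0 ≤ b ⬝ᵥ S *ᵥ b := by simpa using hS.dotProduct_mulVec_nonneg b
  nlinarith [hS.dotProduct_mulVec_sq_le a b, sq_nonneg (a ⬝ᵥ S *ᵥ a - b ⬝ᵥ S *ᵥ b)]

end QuadraticForm

theorem dotProduct_symPart_mulVec_self {d : ℕ} (A : Matrix (Fin d) (Fin d) ℝ)
    (v : Fin d → ℝ) : v ⬝ᵥ symPart A *ᵥ v = v ⬝ᵥ Aᵀ *ᵥ v := by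
  rw [symPart, smul_mulVec, add_mulVec, dotProduct_smul, dotProduct_add,
    dotProduct_transpose_mulVec, smul_eq_mul]
  ring

section EnergyNorm

variable {d : ℕ} {G : Matrix (Fin d) (Fin d) ℝ}

theorem normG_pos (hG : G.PosDef) {v : Fin d → ℝ} (hv : v ≠ 0) : 0 < normG G v :=
  Real.sqrt_pos.mpr (by simpa using hG.dotProduct_mulVec_pos hv)

theorem normG_neg (v : Fin d → ℝ) : normG G (-v) = normG G v := by
  simp only [normG, mulVec_neg, dotProduct_neg, neg_dotProduct, neg_neg]

theorem dotProduct_mulVec_le_normG_mul_normG (hG : G.PosSemidef) (a b : Fin d → ℝ) :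
    a ⬝ᵥ G *ᵥ b ≤ normG G a * normG G b := by
  rw [normG, normG, ← Real.sqrt_mul (by simpa using hG.dotProduct_mulVec_nonneg a)]
  exact Real.le_sqrt_of_sq_le (hG.dotProduct_mulVec_sq_le a b)

theorem dotProduct_le_dualNorm_mul_normG (hG : G.PosDef) (r v : Fin d → ℝ) :
    r ⬝ᵥ v ≤ dualNorm G r * normG G v := by
  rcases eq_or_ne v 0 with rfl | hv
  · simp [normG]
  have hGt : Gᵀ = G := by simpa using hG.isHermitian.eq
  -- `G⁻¹ r` is the Riesz representative of `r` for the `G`-inner product.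
  have hriesz : ∀ w, r ⬝ᵥ w = G⁻¹ *ᵥ r ⬝ᵥ G *ᵥ w := fun w => by
    rw [← dotProduct_transpose_mulVec, hGt, dotProduct_comm, mulVec_mulVec,
      mul_nonsing_inv G (isUnit_iff_ne_zero.mpr hG.det_pos.ne'), one_mulVec]
  have hbdd : BddAbove (Set.range fun w : {w : Fin d → ℝ // w ≠ 0} =>
      r ⬝ᵥ (w : Fin d → ℝ) / normG G w) := by
    refine ⟨normG G (G⁻¹ *ᵥ r), ?_⟩
    rintro _ ⟨⟨w, hw⟩, rfl⟩
    rw [div_le_iff₀ (normG_pos hG hw), hriesz]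
    exact dotProduct_mulVec_le_normG_mul_normG hG.posSemidef _ _
  have hle := le_ciSup hbdd ⟨v, hv⟩
  rwa [div_le_iff₀ (normG_pos hG hv)] at hle

end EnergyNorm

theorem two_mul_mul_le_sq_div_add_mul_sq {α x y : ℝ} (hα : 0 < α) :
    2 * (x * y) ≤ x ^ 2 / α + α * y ^ 2 := by
  rw [div_add' _ _ _ hα.ne', le_div_iff₀ hα]
  nlinarith [sq_nonneg (x - α * y)]

theorem energy_step {d : ℕ} {G M A : Matrix (Fin d) (Fin d) ℝ} (hG : G.PosDef)
    (hM : M.PosSemidef) {Δt αA : ℝ} (hΔt : 0 ≤ Δt) (hαA : 0 < αA)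
    (hcoA : ∀ v : Fin d → ℝ, αA * normG G v ^ 2 ≤ v ⬝ᵥ symPart A *ᵥ v)
    {e e' r : Fin d → ℝ} (hstep : (M + Δt • Aᵀ) *ᵥ e = M *ᵥ e' - Δt • r) :
    e ⬝ᵥ M *ᵥ e + Δt * (e ⬝ᵥ Aᵀ *ᵥ e) ≤ e' ⬝ᵥ M *ᵥ e' + Δt / αA * dualNorm G r ^ 2 := by
  have htested : e ⬝ᵥ M *ᵥ e + Δt * (e ⬝ᵥ Aᵀ *ᵥ e) = e ⬝ᵥ M *ᵥ e' + Δt * -(r ⬝ᵥ e) := by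
    have h := congrArg (e ⬝ᵥ ·) hstep
    simp only [add_mulVec, smul_mulVec, dotProduct_add, dotProduct_sub, dotProduct_smul,
      smul_eq_mul] at h
    rw [h, dotProduct_comm e r]
    ring
  have hmixed := hM.two_mul_dotProduct_mulVec_le e e'
  have hload : 2 * -(r ⬝ᵥ e) ≤ dualNorm G r ^ 2 / αA + αA * normG G e ^ 2 := by
    have h := dotProduct_le_dualNorm_mul_normG hG r (-e)
    rw [dotProduct_neg, normG_neg] at h
    linarith [two_mul_mul_le_sq_div_add_mul_sq (x := dualNorm G r) (y := normG G e) hαA]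
  have hcoercive := (hcoA e).trans_eq (dotProduct_symPart_mulVec_self A e)
  have hΔtload := mul_le_mul_of_nonneg_left hload hΔt
  have hΔtcoercive := mul_le_mul_of_nonneg_left hcoercive hΔt
  rw [div_mul_eq_mul_div, mul_div_assoc]
  linarith

theorem stmt9_general {d : ℕ}
    (G M A : Matrix (Fin d) (Fin d) ℝ) (hG : G.PosDef) (hM : M.PosSemidef)
    (Δt : ℝ) (hΔt : 0 < Δt) (N : ℕ)
    (αA : ℝ) (hαA : 0 < αA)
    (hcoA : ∀ v : Fin d → ℝ, αA * (normG G v)^2 ≤ v ⬝ᵥ (symPart A).mulVec v)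
    (ε ϱ : ℕ → Fin d → ℝ) (hεN : ε N = 0)
    (hstep : ∀ k, k < N →
      (M + Δt • Aᵀ).mulVec (ε k) = M.mulVec (ε (k + 1)) - Δt • ϱ k)
    (n : ℕ) (hn : n < N) :
    ε n ⬝ᵥ M.mulVec (ε n) +
        Δt * ∑ m ∈ Finset.Ico n N, ε m ⬝ᵥ Aᵀ.mulVec (ε m) ≤
      (Δt / αA) * ∑ m ∈ Finset.Ico n N, (dualNorm G (ϱ m))^2 := by
  have htelescoped := add_sum_Ico_le_of_le_succ hn.le fun k hk =>
    energy_step hG hM hΔt.le hαA hcoA (hstep k (mem_Ico.mp hk).2)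
  simpa only [hεN, mulVec_zero, dotProduct_zero, zero_add, ← mul_sum] using htelescoped

theorem stmt9 {d : ℕ} (hd : 1 ≤ d)
    (G M A : Matrix (Fin d) (Fin d) ℝ) (hG : G.PosDef) (hM : M.PosSemidef)
    (Δt : ℝ) (hΔt : 0 < Δt) (N : ℕ) (hN : 1 ≤ N)
    (αA : ℝ) (hαA : 0 < αA)
    (hcoA : ∀ v : Fin d → ℝ, αA * (normG G v)^2 ≤ v ⬝ᵥ (symPart A).mulVec v)
    (ε ϱ : ℕ → Fin d → ℝ) (hεN : ε N = 0)
    (hstep : ∀ k, k < N →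
      (M + Δt • Aᵀ).mulVec (ε k) = M.mulVec (ε (k + 1)) - Δt • ϱ k)
    (n : ℕ) (hn : n < N) :
    ε n ⬝ᵥ M.mulVec (ε n) +
        Δt * ∑ m ∈ Finset.Ico n N, ε m ⬝ᵥ Aᵀ.mulVec (ε m) ≤
      (Δt / αA) * ∑ m ∈ Finset.Ico n N, (dualNorm G (ϱ m))^2 :=
  stmt9_general G M A hG hM Δt hΔt N αA hαA hcoA ε ϱ hεN hstep n hn
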